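/- arXiv:2109.12310 — 2 statements merged into one kernel-verified Lean document; each statement's English description precedes it below -/
import Mathlib

section
/- Let f : ℝ → ℝ be continuous and odd, let q > 2, and suppose the map u ↦ f(u)/u^{q−1} is nondecreasing on (0, +∞). Then for all u ∈ ℝ one has 0 ≤ q·F(u) ≤ f(u)·u, where F(u) = ∫₀ᵘ f(s) ds, provided F(u) ≥ 0 for all u. -/
set_option linter.unnecessarySimpa false


open Filter intervalIntegral

theorem stmt1 (f : ℝ → ℝ) (hf : Continuous f) (hodd : ∀ u, f (-u) = - f u)
    (q : ℝ) (hq : 2 < q)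
    (hmono : ∀ u v : ℝ, 0 < u → u ≤ v → f u / u ^ (q - 1) ≤ f v / v ^ (q - 1))
    (F : ℝ → ℝ) (hF : ∀ u, F u = ∫ s in (0:ℝ)..u, f s)
    (hFpos : ∀ u, 0 ≤ F u) :
    ∀ u : ℝ, 0 ≤ q * F u ∧ q * F u ≤ f u * u := by
  have hq0 : (0:ℝ) < q := by linarith
  have hq1 : (0:ℝ) < q - 1 := by linarith
  have hf0 : f 0 = 0 := by
    have := hodd 0; simp at this; linarith
  have hcont_rpow : Continuous (fun s : ℝ => s ^ (q - 1)) := by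
    rw [continuous_iff_continuousAt]
    intro x
    exact Real.continuousAt_rpow_const x (q - 1) (Or.inr hq1.le)
  -- Key claim for positive u
  have key : ∀ u : ℝ, 0 < u → q * F u ≤ f u * u := by
    intro u hu
    have hupow : (0:ℝ) < u ^ (q - 1) := Real.rpow_pos_of_pos hu _
    set c := f u / u ^ (q - 1) with hc
    have hbound : ∀ s ∈ Set.Icc (0:ℝ) u, f s ≤ c * s ^ (q - 1) := by
      intro s hs
      rcases eq_or_lt_of_le hs.1 with h0 | h0
      · rw [← h0, hf0, Real.zero_rpow (by linarith : q - 1 ≠ 0), mul_zero]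
      · have hspow : (0:ℝ) < s ^ (q - 1) := Real.rpow_pos_of_pos h0 _
        have := hmono s u h0 hs.2
        calc f s = (f s / s ^ (q - 1)) * s ^ (q - 1) := by
              field_simp
          _ ≤ c * s ^ (q - 1) := by
              exact mul_le_mul_of_nonneg_right this hspow.le
    have hint : F u ≤ ∫ s in (0:ℝ)..u, c * s ^ (q - 1) := by
      rw [hF]
      apply intervalIntegral.integral_mono_on hu.le
      · exact hf.intervalIntegrable _ _
      · exact (continuous_const.mul hcont_rpow).intervalIntegrable _ _
      · exact hbound
    have hval : (∫ s in (0:ℝ)..u, c * s ^ (q - 1)) = f u * u / q := by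
      rw [intervalIntegral.integral_const_mul, integral_rpow (Or.inl (by linarith))]
      have : q - 1 + 1 = q := by ring
      rw [this, Real.zero_rpow (by linarith : q ≠ 0)]
      have huq : u ^ q = u ^ (q - 1) * u := by
        rw [← Real.rpow_add_one (ne_of_gt hu)]; ring_nf
      rw [huq, hc]
      field_simp
      ring
    have : F u ≤ f u * u / q := hval ▸ hint
    calc q * F u ≤ q * (f u * u / q) := by nlinarith
      _ = f u * u := by field_simp
  -- F is even
  have hFeven : ∀ u : ℝ, F (-u) = F u := by
    intro u
    have h1 : (∫ s in (0:ℝ)..u, f (-s)) = ∫ s in (-u)..(0:ℝ), f s := by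
      simpa using intervalIntegral.integral_comp_neg (a := 0) (b := u) f
    have h2 : (∫ s in (0:ℝ)..u, f (-s)) = - F u := by
      simp_rw [hodd]
      rw [intervalIntegral.integral_neg, hF]
    have h3 : (∫ s in (0:ℝ)..(-u), f s) = - ∫ s in (-u)..(0:ℝ), f s :=
      intervalIntegral.integral_symm _ _
    rw [hF, h3, ← h1, h2]
    ring
  intro u
  constructor
  · exact mul_nonneg hq0.le (hFpos u)
  · rcases lt_trichotomy u 0 with h | h | h
    · have hneg : 0 < -u := by linarith
      have := key (-u) hneg
      rw [hFeven u] at this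
      rw [hodd u] at this
      nlinarith
    · subst h
      have : F 0 = 0 := by rw [hF]; simp
      rw [this, hf0]; simp
    · exact key u h
end

section
/- Let g : ℝ → ℝ be continuous and odd, let q > 2, and suppose u ↦ g(u)/u^{q−1} is nonincreasing on (0, +∞) and g(u)·u ≥ 0 for all u. Then 0 ≤ g(u)·u ≤ q·G(u) for all u ∈ ℝ, where G(u) = ∫₀ᵘ g(s) ds. -/
open Filter intervalIntegral

theorem stmt2 (g : ℝ → ℝ) (hg : Continuous g) (hodd : ∀ u, g (-u) = - g u)
    (q : ℝ) (hq : 2 < q)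
    (hmono : ∀ u v : ℝ, 0 < u → u ≤ v → g v / v ^ (q - 1) ≤ g u / u ^ (q - 1))
    (hsign : ∀ u : ℝ, 0 ≤ g u * u)
    (G : ℝ → ℝ) (hG : ∀ u, G u = ∫ s in (0:ℝ)..u, g s) :
    ∀ u : ℝ, 0 ≤ g u * u ∧ g u * u ≤ q * G u := by
  have hg0 : g 0 = 0 := by
    have h := hodd 0
    simp at h
    linarith
  have hq0 : (0:ℝ) < q := by linarith
  have key : ∀ u : ℝ, 0 < u → g u * u ≤ q * G u := by
    intro u hu
    have hgu : 0 ≤ g u := nonneg_of_mul_nonneg_right (by linarith [hsign u]) hu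
    set c := g u / u ^ (q - 1) with hc
    have hcnn : 0 ≤ c := div_nonneg hgu (Real.rpow_nonneg hu.le _)
    have hle : ∀ s ∈ Set.Icc (0:ℝ) u, c * s ^ (q-1) ≤ g s := by
      intro s hs
      rcases eq_or_lt_of_le hs.1 with h0 | h0
      · rw [← h0]
        simp [Real.zero_rpow (by linarith : q - 1 ≠ 0), hg0]
      · have hm := hmono s u h0 hs.2
        have hsp : 0 < s ^ (q-1) := Real.rpow_pos_of_pos h0 _
        calc c * s ^ (q-1) ≤ (g s / s ^ (q-1)) * s ^ (q-1) := by
              exact mul_le_mul_of_nonneg_right hm hsp.le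
          _ = g s := div_mul_cancel₀ _ hsp.ne'
    have hint1 : IntervalIntegrable (fun s => c * s ^ (q-1)) MeasureTheory.volume 0 u :=
      (intervalIntegral.intervalIntegrable_rpow (Or.inl (by linarith))).const_mul c
    have hint2 : IntervalIntegrable g MeasureTheory.volume 0 u := hg.intervalIntegrable _ _
    have hI : (∫ s in (0:ℝ)..u, c * s ^ (q-1)) ≤ G u := by
      rw [hG]
      exact intervalIntegral.integral_mono_on hu.le hint1 hint2 hle
    have hval : (∫ s in (0:ℝ)..u, c * s ^ (q-1)) = c * (u ^ q / q) := by
      rw [intervalIntegral.integral_const_mul, integral_rpow (Or.inl (by linarith))]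
      rw [Real.zero_rpow (by linarith : q - 1 + 1 ≠ 0)]
      norm_num
    have hpow : u ^ (q-1) * u = u ^ q := by
      rw [← Real.rpow_add_one hu.ne' (q-1)]
      norm_num
    have hcval : c * (u ^ q / q) = g u * u / q := by
      rw [hc, ← hpow]
      have hup : (0:ℝ) < u ^ (q-1) := Real.rpow_pos_of_pos hu _
      field_simp
    rw [hval, hcval] at hI
    calc g u * u = q * (g u * u / q) := by field_simp
      _ ≤ q * G u := by exact mul_le_mul_of_nonneg_left hI hq0.le
  have hGeven : ∀ u, G (-u) = G u := by
    intro u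
    have h1 : (∫ s in (0:ℝ)..u, g (-s)) = ∫ s in (-u)..(0:ℝ), g s := by
      simpa only [neg_zero, neg_neg] using intervalIntegral.integral_comp_neg g (a := 0) (b := u)
    have h2 : (∫ s in (0:ℝ)..u, g (-s)) = -(G u) := by
      rw [hG]
      simp_rw [hodd]
      exact intervalIntegral.integral_neg
    have h3 : (∫ s in (-u)..(0:ℝ), g s) = -(G (-u)) := by
      rw [hG, intervalIntegral.integral_symm]
    have := h1
    rw [h2, h3] at this
    linarith
  intro u
  refine ⟨hsign u, ?_⟩
  rcases lt_trichotomy u 0 with h | h | h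
  · have hv : 0 < -u := by linarith
    have := key (-u) hv
    rw [hodd, hGeven] at this
    calc g u * u = -g u * -u := by ring
      _ ≤ q * G u := this
  · subst h
    rw [hG]
    simp
  · exact key u h
end
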